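/- Let N ≥ 2 be an integer and let η denote the Dedekind eta function. For every τ in the complex upper half-plane, (1/(2πi)) · (N · η′(Nτ)/η(Nτ) − η′(τ)/η(τ)) = E₂^{(N)}(τ); that is, the logarithmic derivative (1/(2πi)) d/dτ log(η(Nτ)/η(τ)) equals the Eisenstein series (N−1)/24 + Σ_{n≥1} σ₁(n)(qⁿ − N q^{Nn}). -/

import Mathlib

open Complex UpperHalfPlane Matrix MatrixGroups Filter

/-- `q = e^{2πiτ}`. -/
noncomputable def qExp (τ : ℂ) : ℂ := Complex.exp (2 * Real.pi * Complex.I * τ)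

/-- `σ_k(n) = Σ_{d ∣ n} d^k`. -/
def sigma' (k n : ℕ) : ℕ := ∑ d ∈ n.divisors, d ^ k

/-- Normalized Eisenstein series `E₄(τ) = 1 + 240 Σ_{n≥1} σ₃(n) qⁿ`. -/
noncomputable def E4 (τ : ℂ) : ℂ := 1 + 240 * ∑' n : ℕ+, (sigma' 3 n : ℂ) * qExp τ ^ (n : ℕ)

/-- Normalized Eisenstein series `E₆(τ) = 1 − 504 Σ_{n≥1} σ₅(n) qⁿ`. -/
noncomputable def E6 (τ : ℂ) : ℂ := 1 - 504 * ∑' n : ℕ+, (sigma' 5 n : ℂ) * qExp τ ^ (n : ℕ)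

/-- Normalized weight-2 Eisenstein series `E₂(τ) = 1 − 24 Σ_{n≥1} σ₁(n) qⁿ`. -/
noncomputable def E2 (τ : ℂ) : ℂ := 1 - 24 * ∑' n : ℕ+, (sigma' 1 n : ℂ) * qExp τ ^ (n : ℕ)

/-- `E₂^{(N)}(τ) = (N−1)/24 + Σ_{n≥1} σ₁(n)(qⁿ − N q^{Nn})`. -/
noncomputable def E2N (N : ℕ) (τ : ℂ) : ℂ :=
  ((N : ℂ) - 1) / 24 +
    ∑' n : ℕ+, (sigma' 1 n : ℂ) * (qExp τ ^ (n : ℕ) - (N : ℂ) * qExp τ ^ (N * (n : ℕ)))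

/-- `a₄(τ) = −E₄(τ)/(48 E₂^{(N)}(τ)²)`. -/
noncomputable def a4 (N : ℕ) (τ : ℂ) : ℂ := -E4 τ / (48 * E2N N τ ^ 2)

/-- `a₆(τ) = E₆(τ)/(864 E₂^{(N)}(τ)³)`. -/
noncomputable def a6 (N : ℕ) (τ : ℂ) : ℂ := E6 τ / (864 * E2N N τ ^ 3)

/-- `a₄′(τ) = −E₄(Nτ)/(48 E₂^{(N)}(τ)²)`. -/
noncomputable def a4' (N : ℕ) (τ : ℂ) : ℂ := -E4 ((N : ℂ) * τ) / (48 * E2N N τ ^ 2)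

/-- `a₆′(τ) = E₆(Nτ)/(864 E₂^{(N)}(τ)³)`. -/
noncomputable def a6' (N : ℕ) (τ : ℂ) : ℂ := E6 ((N : ℂ) * τ) / (864 * E2N N τ ^ 3)

/-- The Dedekind eta function `η(τ) = e^{πiτ/12} ∏_{n≥1} (1 − qⁿ)`. -/
noncomputable def dedekindEta (τ : ℂ) : ℂ :=
  Complex.exp ((Real.pi : ℂ) * Complex.I * τ / 12) * ∏' n : ℕ+, (1 - qExp τ ^ (n : ℕ))

/-!
`dedekindEta` is Mathlib's `ModularForm.eta`, whose logarithmic derivative is `(πi/12)·E₂` with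
`E₂ = 1 − 24 Σ σ₁(n) qⁿ`. Since `q(Nτ) = q(τ)^N`, the difference
`(N·E₂(Nτ) − E₂(τ)) / 24` of the two logarithmic derivatives is exactly `E₂^{(N)}(τ)`.
-/

open scoped ArithmeticFunction.sigma

lemma sigma'_eq_sigma (k n : ℕ) : sigma' k n = σ k n :=
  ArithmeticFunction.sigma_apply.symm

lemma qExp_natCast_mul (N : ℕ) (z : ℂ) : qExp (N * z) = qExp z ^ N := by
  rw [qExp, qExp, ← Complex.exp_nat_mul]
  ring_nf

lemma dedekindEta_eq_eta : dedekindEta = ModularForm.eta := by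
  ext z
  rw [dedekindEta, ModularForm.eta, tprod_pnat_eq_tprod_succ (f := fun n ↦ 1 - qExp z ^ n)]
  congr 1
  · rw [Function.Periodic.qParam]
    congr 1
    push_cast
    ring
  · simp [qExp, ModularForm.eta_q_eq_pow]

lemma summable_sigma_one_mul_pow {q : ℂ} (hq : ‖q‖ < 1) :
    Summable fun n : ℕ+ ↦ (σ 1 n : ℂ) * q ^ (n : ℕ) := by
  have h : Summable fun n : ℕ ↦ (σ 1 n : ℂ) * q ^ n := by
    refine .of_norm_bounded (summable_norm_pow_mul_geometric_of_norm_lt_one 2 hq) fun n ↦ ?_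
    simp only [norm_mul, Complex.norm_natCast, norm_pow]
    gcongr
    exact_mod_cast ArithmeticFunction.sigma_le_pow_succ 1 n
  exact h.comp_injective PNat.coe_injective

lemma deriv_dedekindEta_div_self {z : ℂ} (hz : 0 < z.im) :
    deriv dedekindEta z / dedekindEta z =
      Real.pi * Complex.I / 12 * (1 - 24 * ∑' n : ℕ+, (σ 1 n : ℂ) * qExp z ^ (n : ℕ)) := by
  rw [← logDeriv_apply, dedekindEta_eq_eta]
  exact (ModularForm.logDeriv_eta_eq_E2 ⟨z, hz⟩).trans
    (congrArg _ (EisensteinSeries.E2_eq_tsum_cexp ⟨z, hz⟩))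

lemma E2N_eq_sub_tsum {N : ℕ} (hN : 0 < N) (τ : ℍ) :
    E2N N τ = ((N : ℂ) - 1) / 24 + ∑' n : ℕ+, (σ 1 n : ℂ) * qExp τ ^ (n : ℕ) -
      N * ∑' n : ℕ+, (σ 1 n : ℂ) * (qExp τ ^ N) ^ (n : ℕ) := by
  have hq : ‖qExp τ‖ < 1 := norm_exp_two_pi_I_lt_one τ
  have hqN : ‖qExp τ ^ N‖ < 1 := by
    rw [norm_pow]
    exact pow_lt_one₀ (norm_nonneg _) hq hN.ne'
  rw [E2N, add_sub_assoc, ← tsum_mul_left, ← (summable_sigma_one_mul_pow hq).tsum_sub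
    ((summable_sigma_one_mul_pow hqN).mul_left _)]
  congr 2 with n
  rw [sigma'_eq_sigma, ← pow_mul]
  ring

/-- The logarithmic derivative `(1/(2πi)) d/dτ log(η(Nτ)/η(τ))` equals `E₂^{(N)}(τ)`. -/
theorem E2N_eq_eta_log_deriv (N : ℕ) (hN : 2 ≤ N) (τ : ℍ) :
    (1 / (2 * (Real.pi : ℂ) * Complex.I)) *
      ((N : ℂ) * deriv dedekindEta ((N : ℂ) * τ) / dedekindEta ((N : ℂ) * τ) -
        deriv dedekindEta (τ : ℂ) / dedekindEta (τ : ℂ)) = E2N N (τ : ℂ) := by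
  have hN0 : 0 < N := by omega
  have hNτ : 0 < ((N : ℂ) * τ).im := by simpa using mul_pos (Nat.cast_pos.2 hN0) τ.im_pos
  rw [mul_div_assoc, deriv_dedekindEta_div_self hNτ, deriv_dedekindEta_div_self τ.im_pos,
    qExp_natCast_mul, E2N_eq_sub_tsum hN0]
  field_simp
  ring
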